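/- Let A, B be symmetric negative Laplacians on n nodes that agree except on the edge (i,j), where A_ij > B_ij = 0, and fix x₀ ∈ ℝⁿ with x₀(i) ≠ x₀(j). Define Λ(s,τ) = e^{sA} e^{2τB} e^{sA} − e^{2(s+τ)A}. Then there exist δ₀ > 0 such that for all 0 < τ ≤ s with s + τ ≤ δ₀, x₀ᵀ Λ(s,τ) x₀ > 0. -/

import Mathlib

/-!
Because `e^{sA}` commutes with `e^{2τA}`, `Λ(s,τ) = e^{sA} (e^{2τB} - e^{2τA}) e^{sA}`.
As `τ → 0` the difference quotient `τ⁻¹ (e^{2τB} - e^{2τA})` tends to `2 (B - A)`, and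
`e^{sA} → 1` as `s → 0`, so `τ⁻¹ x₀ᵀ Λ(s,τ) x₀ → 2 x₀ᵀ (B - A) x₀` jointly in `(s, τ)`.
The Laplacian identity `xᵀ M x = -½ ∑ₖₗ M_kl (x_k - x_l)²` shows that
`x₀ᵀ (B - A) x₀ = A_ij (x₀(i) - x₀(j))² > 0`, since `B - A` only lives on the edge `(i, j)`.
-/

open Matrix Filter Topology Finset

section Exponential

variable {𝔸 : Type*} [NormedRing 𝔸] [NormedAlgebra ℝ 𝔸] [CompleteSpace 𝔸]

theorem tendsto_exp_smul_nhds_zero (X : 𝔸) :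
    Tendsto (fun t : ℝ => NormedSpace.exp (t • X)) (𝓝 0) (𝓝 1) := by
  simpa using (hasDerivAt_exp_smul_const (𝕂 := ℝ) X 0).continuousAt.tendsto

theorem tendsto_inv_smul_exp_mul_smul_sub_exp_mul_smul (X Y : 𝔸) (c : ℝ) :
    Tendsto (fun t : ℝ => t⁻¹ • (NormedSpace.exp ((c * t) • Y) - NormedSpace.exp ((c * t) • X)))
      (𝓝[≠] 0) (𝓝 (c • (Y - X))) := by
  have h := ((hasDerivAt_exp_smul_const (𝕂 := ℝ) (c • Y) 0).sub
    (hasDerivAt_exp_smul_const (𝕂 := ℝ) (c • X) 0)).tendsto_slope_zero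
  simp_rw [mul_comm c, mul_smul]
  simpa [smul_sub] using h

end Exponential

namespace Matrix

variable {ι : Type*} [Fintype ι]

theorem exp_smul_mul_exp_smul_mul_exp_smul [DecidableEq ι] (A : Matrix ι ι ℝ) (s t : ℝ) :
    NormedSpace.exp (s • A) * NormedSpace.exp (t • A) * NormedSpace.exp (s • A)
      = NormedSpace.exp ((s + t + s) • A) := by
  have hcomm : ∀ a b : ℝ, Commute (a • A) (b • A) := fun a b =>
    ((Commute.refl A).smul_left a).smul_right b
  rw [← exp_add_of_commute _ _ (hcomm s t), ← add_smul,
    ← exp_add_of_commute _ _ (hcomm _ s), ← add_smul]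

theorem dotProduct_mulVec_eq_neg_half_sum {M : Matrix ι ι ℝ} (hM : M.IsSymm)
    (hrow : ∀ k, ∑ l, M k l = 0) (x : ι → ℝ) :
    x ⬝ᵥ (M *ᵥ x) = -(∑ k, ∑ l, M k l * (x k - x l) ^ 2) / 2 := by
  have hrow_sum : ∑ k, ∑ l, M k l * x k ^ 2 = 0 := by simp [← sum_mul, hrow]
  have hcol_sum : ∑ k, ∑ l, M k l * x l ^ 2 = 0 := by
    rw [sum_comm]; simp [← sum_mul, hM.apply, hrow]
  have hexpand : ∑ k, ∑ l, M k l * (x k - x l) ^ 2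
      = ∑ k, ∑ l, M k l * x k ^ 2 + ∑ k, ∑ l, M k l * x l ^ 2 - 2 * (x ⬝ᵥ (M *ᵥ x)) := by
    simp only [dotProduct, mulVec, Finset.mul_sum, ← sum_add_distrib, ← sum_sub_distrib]
    exact sum_congr rfl fun k _ => sum_congr rfl fun l _ => by ring
  rw [hexpand, hrow_sum, hcol_sum]
  ring

theorem dotProduct_sub_mulVec_of_eq_off_edge {A B : Matrix ι ι ℝ} {i j : ι} (hij : i ≠ j)
    (hAsymm : A.IsSymm) (hBsymm : B.IsSymm)
    (hArow : ∀ k, ∑ l, A k l = 0) (hBrow : ∀ k, ∑ l, B k l = 0)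
    (hagree : ∀ k l, k ≠ l → ¬((k = i ∧ l = j) ∨ (k = j ∧ l = i)) → A k l = B k l)
    (hB0 : B i j = 0) (y : ι → ℝ) :
    y ⬝ᵥ ((B - A) *ᵥ y) = A i j * (y i - y j) ^ 2 := by
  have hrow : ∀ k, ∑ l, (B - A) k l = 0 := fun k => by
    simp [sum_sub_distrib, hArow, hBrow]
  have hedge : ∑ k, ∑ l, (B - A) k l * (y k - y l) ^ 2 = -2 * A i j * (y i - y j) ^ 2 := by
    rw [← Fintype.sum_prod_type', Fintype.sum_eq_add (i, j) (j, i) (by simp [hij])]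
    · simp only [sub_apply, hB0, hBsymm.apply i j, hAsymm.apply i j]
      ring
    · rintro ⟨k, l⟩ hkl
      by_cases hkk : k = l
      · simp [hkk]
      · rw [sub_apply, hagree k l hkk (by aesop), sub_self, zero_mul]
  rw [dotProduct_mulVec_eq_neg_half_sum (hBsymm.sub hAsymm) hrow, hedge]
  ring

theorem exists_pos_dotProduct_mul_mul_mulVec [DecidableEq ι] {E D : ℝ → Matrix ι ι ℝ}
    {D' : Matrix ι ι ℝ} (hE : Tendsto E (𝓝 0) (𝓝 1))
    (hD : Tendsto (fun τ => τ⁻¹ • D τ) (𝓝[≠] 0) (𝓝 D')) {x : ι → ℝ}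
    (hx : 0 < x ⬝ᵥ (D' *ᵥ x)) :
    ∃ δ > 0, ∀ s τ, |s| < δ → 0 < τ → τ < δ → 0 < x ⬝ᵥ ((E s * D τ * E s) *ᵥ x) := by
  have hquad : Continuous fun M : Matrix ι ι ℝ => x ⬝ᵥ (M *ᵥ x) :=
    continuous_const.dotProduct (continuous_id.matrix_mulVec continuous_const)
  have hlim : Tendsto (fun p : ℝ × ℝ => x ⬝ᵥ ((E p.1 * (p.2⁻¹ • D p.2) * E p.1) *ᵥ x))
      (𝓝 0 ×ˢ 𝓝[≠] 0) (𝓝 (x ⬝ᵥ (D' *ᵥ x))) := by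
    have hprod := ((hE.comp tendsto_fst).mul (hD.comp tendsto_snd)).mul (hE.comp tendsto_fst)
    rw [one_mul, mul_one] at hprod
    exact (hquad.tendsto _).comp hprod
  obtain ⟨ps, hps, pτ, hpτ, hpos⟩ := eventually_prod_iff.1 (hlim.eventually (lt_mem_nhds hx))
  obtain ⟨ε₁, hε₁, hs⟩ := Metric.eventually_nhds_iff.1 hps
  obtain ⟨ε₂, hε₂, hτ⟩ := Metric.eventually_nhds_iff.1 (eventually_nhdsWithin_iff.1 hpτ)
  refine ⟨min ε₁ ε₂, lt_min hε₁ hε₂, fun s τ hsδ hτ0 hτδ => ?_⟩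
  have h := hpos (hs (by simpa using hsδ.trans_le (min_le_left _ _)))
    (hτ (by simpa [abs_of_pos hτ0] using hτδ.trans_le (min_le_right _ _)) hτ0.ne')
  simp only [Matrix.mul_smul, Matrix.smul_mul, smul_mulVec, dotProduct_smul, smul_eq_mul] at h
  exact pos_of_mul_pos_right h (inv_pos.2 hτ0).le

end Matrix

theorem stmt_13_general {n : ℕ} (A B : Matrix (Fin n) (Fin n) ℝ) (i j : Fin n) (hij : i ≠ j)
    (hAsymm : A.IsSymm) (hBsymm : B.IsSymm)
    (hArow : ∀ k, ∑ l, A k l = 0) (hBrow : ∀ k, ∑ l, B k l = 0)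
    (hagree : ∀ k l, k ≠ l → ¬((k = i ∧ l = j) ∨ (k = j ∧ l = i)) → A k l = B k l)
    (hB0 : B i j = 0) (hA0 : A i j > 0)
    (x₀ : Fin n → ℝ) (hx₀ : x₀ i ≠ x₀ j) :
    ∃ δ₀ : ℝ, 0 < δ₀ ∧ ∀ s τ : ℝ, 0 < τ → τ ≤ s → s + τ ≤ δ₀ →
      0 < x₀ ⬝ᵥ ((NormedSpace.exp (s • A) * NormedSpace.exp ((2 * τ) • B) *
            NormedSpace.exp (s • A) -
          NormedSpace.exp ((2 * (s + τ)) • A)) *ᵥ x₀) := by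
  -- Matrices carry no global norm; the operator norm induces their product topology.
  open scoped Norms.Operator in
  have hE := tendsto_exp_smul_nhds_zero A
  open scoped Norms.Operator in
  have hD := tendsto_inv_smul_exp_mul_smul_sub_exp_mul_smul A B 2
  have hpos : 0 < x₀ ⬝ᵥ (((2 : ℝ) • (B - A)) *ᵥ x₀) := by
    rw [smul_mulVec, dotProduct_smul,
      dotProduct_sub_mulVec_of_eq_off_edge hij hAsymm hBsymm hArow hBrow hagree hB0]
    have := sub_ne_zero.2 hx₀
    positivity
  obtain ⟨δ, hδ, hΛ⟩ := exists_pos_dotProduct_mul_mul_mulVec hE hD hpos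
  refine ⟨δ / 2, half_pos hδ, fun s τ hτ hτs hsτ => ?_⟩
  rw [show 2 * (s + τ) = s + 2 * τ + s by ring, ← exp_smul_mul_exp_smul_mul_exp_smul,
    ← sub_mul, ← mul_sub]
  exact hΛ s τ (by rw [abs_of_pos (by linarith)]; linarith) hτ (by linarith)

/-- Breaking a link between disagreeing nodes strictly slows convergence for short
horizons: with `Λ(s,τ) = e^{sA} e^{2τB} e^{sA} − e^{2(s+τ)A}`, there is `δ₀ > 0`
such that `x₀ᵀ Λ(s,τ) x₀ > 0` whenever `0 < τ ≤ s` and `s + τ ≤ δ₀`. -/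
theorem stmt_13 {n : ℕ} (A B : Matrix (Fin n) (Fin n) ℝ) (i j : Fin n) (hij : i ≠ j)
    (hAsymm : A.IsSymm) (hBsymm : B.IsSymm)
    (hArow : ∀ k, ∑ l, A k l = 0) (hBrow : ∀ k, ∑ l, B k l = 0)
    (hAoff : ∀ k l, k ≠ l → 0 ≤ A k l) (hBoff : ∀ k l, k ≠ l → 0 ≤ B k l)
    (hagree : ∀ k l, k ≠ l → ¬((k = i ∧ l = j) ∨ (k = j ∧ l = i)) → A k l = B k l)
    (hB0 : B i j = 0) (hA0 : A i j > 0)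
    (x₀ : Fin n → ℝ) (hx₀ : x₀ i ≠ x₀ j) :
    ∃ δ₀ : ℝ, 0 < δ₀ ∧ ∀ s τ : ℝ, 0 < τ → τ ≤ s → s + τ ≤ δ₀ →
      0 < x₀ ⬝ᵥ ((NormedSpace.exp (s • A) * NormedSpace.exp ((2 * τ) • B) *
            NormedSpace.exp (s • A) -
          NormedSpace.exp ((2 * (s + τ)) • A)) *ᵥ x₀) :=
  stmt_13_general A B i j hij hAsymm hBsymm hArow hBrow hagree hB0 hA0 x₀ hx₀
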